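/- arXiv:1511.06323 — 2 statements merged into one kernel-verified Lean document; each statement's English description precedes it below -/
import Mathlib

section
/- In the SIR model, I(t) → 0 as t → ∞. -/
open Filter Topology Set

/-!
S is nonincreasing and nonnegative, R is nondecreasing and bounded, so both converge; since
S + I + R is conserved, I converges as well, say to c. Then R' = μ I tends to μ c, and a
convergent function whose derivative has a limit must have derivative limit 0, so c = 0.
-/

theorem MonotoneOn.tendsto_atTop_ciSup_Ici {α β : Type*} [Preorder α] [IsDirectedOrder α]
    [ConditionallyCompleteLinearOrder β] [TopologicalSpace β] [OrderTopology β]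
    {f : α → β} {a : α} (hf : MonotoneOn f (Ici a)) (hb : BddAbove (f '' Ici a)) :
    Tendsto f atTop (𝓝 (⨆ x : Ici a, f x)) := by
  rw [← tendsto_comp_val_Ici_atTop]
  exact tendsto_atTop_ciSup (fun x y hxy => hf x.2 y.2 hxy) (by rwa [← image_eq_range])

theorem AntitoneOn.tendsto_atTop_ciInf_Ici {α β : Type*} [Preorder α] [IsDirectedOrder α]
    [ConditionallyCompleteLinearOrder β] [TopologicalSpace β] [OrderTopology β]
    {f : α → β} {a : α} (hf : AntitoneOn f (Ici a)) (hb : BddBelow (f '' Ici a)) :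
    Tendsto f atTop (𝓝 (⨅ x : Ici a, f x)) :=
  hf.dual_right.tendsto_atTop_ciSup_Ici hb

section Ici

variable {f f' : ℝ → ℝ} {a : ℝ}

theorem monotoneOn_Ici_of_hasDerivAt_nonneg (hf : ∀ t, a ≤ t → HasDerivAt f (f' t) t)
    (hf' : ∀ t, a ≤ t → 0 ≤ f' t) : MonotoneOn f (Ici a) :=
  monotoneOn_of_hasDerivWithinAt_nonneg (convex_Ici a)
    (fun t ht => (hf t ht).continuousAt.continuousWithinAt)
    (fun t ht => (hf t (interior_subset ht)).hasDerivWithinAt)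
    (fun t ht => hf' t (interior_subset ht))

theorem antitoneOn_Ici_of_hasDerivAt_nonpos (hf : ∀ t, a ≤ t → HasDerivAt f (f' t) t)
    (hf' : ∀ t, a ≤ t → f' t ≤ 0) : AntitoneOn f (Ici a) := fun _ hx _ hy hxy =>
  neg_le_neg_iff.mp <| monotoneOn_Ici_of_hasDerivAt_nonneg (fun t ht => (hf t ht).neg)
    (fun t ht => neg_nonneg.mpr (hf' t ht)) hx hy hxy

theorem eq_of_hasDerivAt_zero_of_le (hf : ∀ t, a ≤ t → HasDerivAt f 0 t) {t : ℝ} (ht : a ≤ t) :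
    f t = f a :=
  le_antisymm (antitoneOn_Ici_of_hasDerivAt_nonpos hf (fun _ _ => le_rfl) self_mem_Ici ht ht)
    (monotoneOn_Ici_of_hasDerivAt_nonneg hf (fun _ _ => le_rfl) self_mem_Ici ht ht)

theorem tendsto_atTop_of_hasDerivAt_ge {m : ℝ} (hm : 0 < m)
    (hf : ∀ t, a ≤ t → HasDerivAt f (f' t) t) (hf' : ∀ t, a ≤ t → m ≤ f' t) :
    Tendsto f atTop atTop := by
  have hmono : MonotoneOn (fun t => f t - m * t) (Ici a) :=
    monotoneOn_Ici_of_hasDerivAt_nonneg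
      (fun t ht => (hf t ht).sub ((hasDerivAt_id' t).const_mul m))
      (fun t ht => by linarith [hf' t ht])
  refine tendsto_atTop_mono' _ ?_
    (tendsto_atTop_add_const_right _ (f a - m * a) (tendsto_id.const_mul_atTop hm))
  filter_upwards [eventually_ge_atTop a] with t ht
  show m * t + (f a - m * a) ≤ f t
  linarith [hmono self_mem_Ici ht ht]

theorem le_zero_of_tendsto_of_tendsto_hasDerivAt {L L' : ℝ}
    (hf : ∀ᶠ t in atTop, HasDerivAt f (f' t) t) (hfL : Tendsto f atTop (𝓝 L))
    (hf'L' : Tendsto f' atTop (𝓝 L')) : L' ≤ 0 := by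
  by_contra! hL'
  obtain ⟨a, ha⟩ :=
    (hf.and (hf'L'.eventually (lt_mem_nhds (half_lt_self hL')))).exists_forall_of_atTop
  exact not_tendsto_nhds_of_tendsto_atTop (tendsto_atTop_of_hasDerivAt_ge (half_pos hL')
    (fun t ht => (ha t ht).1) (fun t ht => (ha t ht).2.le)) L hfL

theorem eq_zero_of_tendsto_of_tendsto_hasDerivAt {L L' : ℝ}
    (hf : ∀ᶠ t in atTop, HasDerivAt f (f' t) t) (hfL : Tendsto f atTop (𝓝 L))
    (hf'L' : Tendsto f' atTop (𝓝 L')) : L' = 0 :=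
  le_antisymm (le_zero_of_tendsto_of_tendsto_hasDerivAt hf hfL hf'L') <| neg_nonpos.mp <|
    le_zero_of_tendsto_of_tendsto_hasDerivAt (hf.mono fun _ h => h.neg) hfL.neg hf'L'.neg

end Ici

theorem sir_I_tendsto_zero_general
    (β μ : ℝ) (hβ : 0 < β) (hμ : 0 < μ)
    (S I R : ℝ → ℝ)
    (hS : ∀ t, 0 ≤ t → HasDerivAt S (-β * S t * I t) t)
    (hI : ∀ t, 0 ≤ t → HasDerivAt I (β * S t * I t - μ * I t) t)
    (hR : ∀ t, 0 ≤ t → HasDerivAt R (μ * I t) t)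
    (hSnn : ∀ t, 0 ≤ t → 0 ≤ S t) (hInn : ∀ t, 0 ≤ t → 0 ≤ I t)
    (hRb : ∀ t, 0 ≤ t → R t ≤ S 0 + I 0) :
    Tendsto I atTop (𝓝 0) := by
  have hSanti : AntitoneOn S (Ici 0) := antitoneOn_Ici_of_hasDerivAt_nonpos hS fun t ht => by
    simpa only [neg_mul, neg_nonpos] using mul_nonneg (mul_nonneg hβ.le (hSnn t ht)) (hInn t ht)
  have hRmono : MonotoneOn R (Ici 0) :=
    monotoneOn_Ici_of_hasDerivAt_nonneg hR fun t ht => mul_nonneg hμ.le (hInn t ht)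
  have hSlim := hSanti.tendsto_atTop_ciInf_Ici ⟨0, by rintro _ ⟨t, ht, rfl⟩; exact hSnn t ht⟩
  have hRlim := hRmono.tendsto_atTop_ciSup_Ici ⟨S 0 + I 0, by rintro _ ⟨t, ht, rfl⟩; exact hRb t ht⟩
  have hconserved (t : ℝ) (ht : 0 ≤ t) : S t + I t + R t = S 0 + I 0 + R 0 :=
    eq_of_hasDerivAt_zero_of_le (f := fun t => S t + I t + R t)
      (fun u hu => (((hS u hu).add (hI u hu)).add (hR u hu)).congr_deriv (by ring)) ht
  obtain ⟨c, hIlim⟩ : ∃ c, Tendsto I atTop (𝓝 c) :=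
    ⟨_, (((tendsto_const_nhds (x := S 0 + I 0 + R 0)).sub hSlim).sub hRlim).congr' <| by
      filter_upwards [eventually_ge_atTop 0] with t ht
      linarith [hconserved t ht]⟩
  have hc : μ * c = 0 :=
    eq_zero_of_tendsto_of_tendsto_hasDerivAt ((eventually_ge_atTop 0).mono hR) hRlim
      (hIlim.const_mul μ)
  obtain rfl : c = 0 := (mul_eq_zero.mp hc).resolve_left hμ.ne'
  exact hIlim

theorem sir_I_tendsto_zero
    (β μ : ℝ) (hβ : 0 < β) (hμ : 0 < μ)
    (S I R : ℝ → ℝ)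
    (hS : ∀ t, 0 ≤ t → HasDerivAt S (-β * S t * I t) t)
    (hI : ∀ t, 0 ≤ t → HasDerivAt I (β * S t * I t - μ * I t) t)
    (hR : ∀ t, 0 ≤ t → HasDerivAt R (μ * I t) t)
    (hS0 : 0 < S 0) (hI0 : 0 < I 0) (hR0 : R 0 = 0)
    (hSnn : ∀ t, 0 ≤ t → 0 ≤ S t) (hInn : ∀ t, 0 ≤ t → 0 ≤ I t)
    (hRb : ∀ t, 0 ≤ t → R t ≤ S 0 + I 0) :
    Tendsto I atTop (𝓝 0) :=
  sir_I_tendsto_zero_general β μ hβ hμ S I R hS hI hR hSnn hInn hRb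
end

section
/- Uniqueness of S∞: the function g(x) := I₀ + S₀ - x + (μ/β) ln(x/S₀) has exactly one root in the open interval (0, S₀), given that I₀ > 0, S₀ > 0. -/
/-!
The function `g x = I₀ + S₀ - x + c log (x / S₀)` with `c = μ / β > 0` is strictly concave on
`(0, ∞)`. Existence of a root is the intermediate value theorem between a point where the
logarithm is very negative and `S₀`, where `g S₀ = I₀ > 0`. Uniqueness: if `a < b < S₀` were both
roots, strict concavity on `[a, S₀]` would give `g b > min (g a) (g S₀) = 0`.
-/

open Set Real

section
variable {c S₀ : ℝ}

lemma strictConcaveOn_mul_log_div (hc : 0 < c) (hS₀ : 0 < S₀) :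
    StrictConcaveOn ℝ (Ioi 0) fun x => c * log (x / S₀) := by
  refine ⟨convex_Ioi 0, fun x hx y hy hxy a b ha hb hab => ?_⟩
  have hlog := strictConcaveOn_log_Ioi.2 (div_pos hx hS₀) (div_pos hy hS₀)
    (by rwa [Ne, div_left_inj' hS₀.ne']) ha hb hab
  simp only [smul_eq_mul] at hlog ⊢
  calc a * (c * log (x / S₀)) + b * (c * log (y / S₀))
      = c * (a * log (x / S₀) + b * log (y / S₀)) := by ring
    _ < c * log (a * (x / S₀) + b * (y / S₀)) := mul_lt_mul_of_pos_left hlog hc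
    _ = c * log ((a * x + b * y) / S₀) := by congr 2; ring

lemma strictConcaveOn_sub_add_mul_log_div (k : ℝ) (hc : 0 < c) (hS₀ : 0 < S₀) :
    StrictConcaveOn ℝ (Ioi 0) fun x => k - x + c * log (x / S₀) :=
  ((concaveOn_const k (convex_Ioi 0)).sub (convexOn_id (convex_Ioi 0))).add_strictConcaveOn
    (strictConcaveOn_mul_log_div hc hS₀)

end

theorem StrictConcaveOn.eq_of_map_eq_zero {f : ℝ → ℝ} {s : Set ℝ} (hf : StrictConcaveOn ℝ s f)
    {x y z : ℝ} (hx : x ∈ s) (hy : y ∈ s) (hz : z ∈ s) (hxz : x < z) (hyz : y < z)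
    (hfz : 0 ≤ f z) (hfx : f x = 0) (hfy : f y = 0) : x = y := by
  have no_two_roots : ∀ a b, a ∈ s → a < b → b < z → f a = 0 → f b = 0 → False := by
    intro a b ha hab hbz hfa hfb
    have := hf.lt_on_openSegment ha hz (hab.trans hbz).ne
      (by rw [openSegment_eq_Ioo (hab.trans hbz)]; exact ⟨hab, hbz⟩)
    simp [hfa, hfb, hfz] at this
  rcases lt_trichotomy x y with h | h | h
  · exact (no_two_roots x y hx h hyz hfx hfy).elim
  · exact h
  · exact (no_two_roots y x hy h hxz hfy hfx).elim

lemma exists_sub_add_mul_log_div_eq_zero {c S₀ I₀ : ℝ} (hc : 0 < c) (hS₀ : 0 < S₀)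
    (hI₀ : 0 < I₀) : ∃ x ∈ Ioo 0 S₀, I₀ + S₀ - x + c * log (x / S₀) = 0 := by
  -- chosen so that the logarithmic term cancels `I₀ + S₀` exactly
  set x₀ := S₀ * exp (-((I₀ + S₀) / c))
  have hx₀ : 0 < x₀ := by positivity
  have hx₀S₀ : x₀ < S₀ :=
    mul_lt_of_lt_one_right hS₀ (exp_lt_one_iff.2 (by simp only [neg_lt_zero]; positivity))
  have hgx₀ : I₀ + S₀ - x₀ + c * log (x₀ / S₀) = -x₀ := by
    rw [mul_div_cancel_left₀ _ hS₀.ne', log_exp]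
    field_simp
    ring
  have hcont : ContinuousOn (fun x => I₀ + S₀ - x + c * log (x / S₀)) (Icc x₀ S₀) := by
    refine ContinuousOn.add (by fun_prop) (continuousOn_const.mul ?_)
    exact (continuousOn_id.div_const S₀).log fun x hx => (div_pos (hx₀.trans_le hx.1) hS₀).ne'
  have hgS₀ : I₀ + S₀ - S₀ + c * log (S₀ / S₀) = I₀ := by simp [hS₀.ne']
  obtain ⟨x, hx, hgx⟩ := intermediate_value_Ioo hx₀S₀.le hcont
    (show (0 : ℝ) ∈ Ioo _ _ by rw [hgx₀, hgS₀]; exact ⟨neg_lt_zero.2 hx₀, hI₀⟩)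
  exact ⟨x, ⟨hx₀.trans hx.1, hx.2⟩, hgx⟩

theorem sir_Sinf_unique_root
    (β μ S₀ I₀ : ℝ) (hβ : 0 < β) (hμ : 0 < μ)
    (hS₀ : 0 < S₀) (hI₀ : 0 < I₀) :
    ∃! x : ℝ, x ∈ Set.Ioo 0 S₀ ∧
      I₀ + S₀ - x + (μ / β) * Real.log (x / S₀) = 0 := by
  have hc : 0 < μ / β := div_pos hμ hβ
  obtain ⟨x, hx, hgx⟩ := exists_sub_add_mul_log_div_eq_zero hc hS₀ hI₀
  refine ⟨x, ⟨hx, hgx⟩, fun y ⟨hy, hgy⟩ => ?_⟩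
  have hgS₀ : 0 ≤ I₀ + S₀ - S₀ + μ / β * log (S₀ / S₀) := by simp [hS₀.ne', hI₀.le]
  exact (strictConcaveOn_sub_add_mul_log_div (I₀ + S₀) hc hS₀).eq_of_map_eq_zero
    hy.1 hx.1 hS₀ hy.2 hx.2 hgS₀ hgy hgx
end
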